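/- arXiv:1703.07433 — 2 statements merged into one kernel-verified Lean document; each statement's English description precedes it below -/
import Mathlib

section
/- Let F be a type, X a fan-set on F, J ⊆ I subsets of F, and g₁, g₂ ∈ X with Z(g₁) ⊆ J and Z(g₂) ⊆ J. Then the map h ↦ h * g₁ * g₂ is an involutive bijection of the set S^I_J = {h ∈ X | Z(h) = I and ∃ u ∈ X, u ⇝ h ∧ Z(u) = J} onto itself. -/
/-- Zero-set of a `SignType`-valued function. -/
def Zset {F : Type*} (g : F → SignType) : Set F := {a | g a = 0}

/-- `h` is a specialization of `g` (written `g ⇝ h`): `h = h² * g` pointwise. -/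
def Spez {F : Type*} (g h : F → SignType) : Prop := h = h ^ 2 * g

/-- A fan-set: a set of `SignType`-valued functions closed under products of
any three of its elements. -/
def IsFanSet {F : Type*} (X : Set (F → SignType)) : Prop :=
  ∀ a ∈ X, ∀ b ∈ X, ∀ c ∈ X, a * b * c ∈ X

/-- `SLev X J I`: elements of `X` of level `I` having a generization of level `J`. -/
def SLev {F : Type*} (X : Set (F → SignType)) (J I : Set F) : Set (F → SignType) :=
  {h | h ∈ X ∧ Zset h = I ∧ ∃ u ∈ X, Spez u h ∧ Zset u = J}

/-!
Multiplying by `g₁` and `g₂` leaves the zero-set of `h` unchanged as soon as `Z(g₁) ∪ Z(g₂) ⊆ Z(h)`,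
and it carries a specialization `u ⇝ h` to `u g₁ g₂ ⇝ h g₁ g₂` because every sign satisfies
`s³ = s`. Since `J ⊆ I`, this applies both to an element of level `I` and to its generization of
level `J`, so the map sends `S^I_J` into itself; and as `s² = 1` for `s ≠ 0`, applying it twice
is the identity there.
-/

section

variable {F : Type*} {g g₁ g₂ h u : F → SignType}

lemma Zset_mul (g h : F → SignType) : Zset (g * h) = Zset g ∪ Zset h := by
  ext a
  exact mul_eq_zero

lemma Zset_mul_of_subset (hg : Zset g ⊆ Zset h) : Zset (h * g) = Zset h := by
  rw [Zset_mul, Set.union_eq_left.mpr hg]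

lemma Zset_mul_mul_of_subset (h₁ : Zset g₁ ⊆ Zset h) (h₂ : Zset g₂ ⊆ Zset h) :
    Zset (h * g₁ * g₂) = Zset h := by
  rw [Zset_mul_of_subset (h₂.trans_eq (Zset_mul_of_subset h₁).symm), Zset_mul_of_subset h₁]

lemma mul_mul_self_of_Zset_subset (hg : Zset g ⊆ Zset h) : h * g * g = h := by
  have key : ∀ x y : SignType, (y = 0 → x = 0) → x * y * y = x := by decide
  funext a
  exact key (h a) (g a) fun hga => hg hga

lemma mul_mul_mul_mul_of_Zset_subset (h₁ : Zset g₁ ⊆ Zset h) (h₂ : Zset g₂ ⊆ Zset h) :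
    h * g₁ * g₂ * g₁ * g₂ = h :=
  calc h * g₁ * g₂ * g₁ * g₂ = h * g₁ * g₁ * g₂ * g₂ := by rw [mul_right_comm (h * g₁) g₂ g₁]
    _ = h := by rw [mul_mul_self_of_Zset_subset h₁, mul_mul_self_of_Zset_subset h₂]

lemma Spez.mul (huh : Spez u h) (g : F → SignType) : Spez (u * g) (h * g) := by
  have key : ∀ x y z : SignType, x = x ^ 2 * y → x * z = (x * z) ^ 2 * (y * z) := by decide
  funext a
  exact key (h a) (u a) (g a) (congrFun huh a)

end

lemma mapsTo_mul_mul_SLev {F : Type*} {X : Set (F → SignType)} (hX : IsFanSet X) {J I : Set F}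
    (hJI : J ⊆ I) {g₁ g₂ : F → SignType} (hg₁ : g₁ ∈ X) (hg₂ : g₂ ∈ X) (hZ₁ : Zset g₁ ⊆ J)
    (hZ₂ : Zset g₂ ⊆ J) : Set.MapsTo (fun h => h * g₁ * g₂) (SLev X J I) (SLev X J I) := by
  rintro h ⟨hhX, rfl, u, huX, huh, rfl⟩
  exact ⟨hX h hhX g₁ hg₁ g₂ hg₂, Zset_mul_mul_of_subset (hZ₁.trans hJI) (hZ₂.trans hJI),
    u * g₁ * g₂, hX u huX g₁ hg₁ g₂ hg₂, (huh.mul g₁).mul g₂, Zset_mul_mul_of_subset hZ₁ hZ₂⟩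

theorem involution_permutes_SSet {F : Type*} (X : Set (F → SignType))
    (hX : IsFanSet X) (J I : Set F) (hJI : J ⊆ I)
    (g₁ g₂ : F → SignType) (hg₁ : g₁ ∈ X) (hg₂ : g₂ ∈ X)
    (hZ₁ : Zset g₁ ⊆ J) (hZ₂ : Zset g₂ ⊆ J) :
    Set.BijOn (fun h => h * g₁ * g₂) (SLev X J I) (SLev X J I) ∧
    (∀ h ∈ SLev X J I, h * g₁ * g₂ * g₁ * g₂ = h) := by
  have hinv : ∀ h ∈ SLev X J I, h * g₁ * g₂ * g₁ * g₂ = h := by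
    rintro h ⟨-, rfl, -⟩
    exact mul_mul_mul_mul_of_Zset_subset (hZ₁.trans hJI) (hZ₂.trans hJI)
  have hmaps := mapsTo_mul_mul_SLev hX hJI hg₁ hg₂ hZ₁ hZ₂
  exact ⟨Set.InvOn.bijOn (f' := fun h => h * g₁ * g₂) ⟨hinv, hinv⟩ hmaps hmaps, hinv⟩
end

section
/- Let F be a type, X a fan-set on F, J ⊆ I subsets of F, and u₁, u₂, h₁, h₂ ∈ X with Z(u₁) = Z(u₂) = J, Z(h₁) = Z(h₂) = I, u₁ ⇝ h₁ and u₂ ⇝ h₂. Assume every g ∈ X with g ⇝ h₁ satisfies J ⊆ Z(g) (i.e. h₁ ∈ C^I_J). Let P_i = {g ∈ X | g ⇝ h_i} (i = 1,2) and define φ(g) = g * u₁ * u₂. Then: (a) φ maps P₁ bijectively onto {v ∈ P₂ | J ⊆ Z(v)}; (b) for all g, g' ∈ P₁, g ⇝ g' if and only if φ(g) ⇝ φ(g'); (c) if moreover every g ∈ X with g ⇝ h₂ satisfies J ⊆ Z(g) (i.e. h₂ ∈ C^I_J), then φ is a bijection of P₁ onto P₂ preserving and reflecting the specialization order. -/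
section

variable {F : Type*}

theorem spez_iff_forall {g h : F → SignType} : Spez g h ↔ ∀ a, h a = h a ^ 2 * g a := by
  simp only [Spez, funext_iff, Pi.mul_apply, Pi.pow_apply]

theorem zset_mul (f g : F → SignType) : Zset (f * g) = Zset f ∪ Zset g :=
  Set.ext fun _ => mul_eq_zero

theorem mul_mul_self_of_zset_subset {v w : F → SignType} (h : Zset w ⊆ Zset v) :
    v * w * w = v := by
  have key : ∀ s t : SignType, (t = 0 → s = 0) → s * t * t = s := by decide
  exact funext fun a => key _ _ (@h a)

theorem spez_mul_right_iff {g g' w : F → SignType} (h : Zset w ⊆ Zset g') :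
    Spez (g * w) (g' * w) ↔ Spez g g' := by
  have key : ∀ s t u : SignType, (u = 0 → t = 0) →
      (t * u = (t * u) ^ 2 * (s * u) ↔ t = t ^ 2 * s) := by decide
  simp only [spez_iff_forall, Pi.mul_apply]
  exact forall_congr' fun a => key _ _ _ (@h a)

theorem eq_mul_of_spez_of_zset_eq {u₁ u₂ h₁ h₂ : F → SignType} (hs₁ : Spez u₁ h₁)
    (hs₂ : Spez u₂ h₂) (hZ : Zset h₁ = Zset h₂) : h₂ = h₁ * (u₁ * u₂) := by
  have key : ∀ s₁ s₂ t₁ t₂ : SignType, t₁ = t₁ ^ 2 * s₁ → t₂ = t₂ ^ 2 * s₂ →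
      (t₁ = 0 ↔ t₂ = 0) → t₂ = t₁ * (s₁ * s₂) := by decide
  exact funext fun a =>
    key _ _ _ _ (spez_iff_forall.1 hs₁ a) (spez_iff_forall.1 hs₂ a) (Set.ext_iff.1 hZ a)

theorem bijOn_mul_spez {X : Set (F → SignType)} {w h : F → SignType}
    (hXw : ∀ g ∈ X, g * w ∈ X) (hwh : Zset w ⊆ Zset h)
    (hC : ∀ g ∈ X, Spez g h → Zset w ⊆ Zset g) :
    Set.BijOn (· * w) {g | g ∈ X ∧ Spez g h}
      {v | (v ∈ X ∧ Spez v (h * w)) ∧ Zset w ⊆ Zset v} := by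
  refine Set.InvOn.bijOn
    ⟨fun g hg => mul_mul_self_of_zset_subset (hC g hg.1 hg.2),
      fun v hv => mul_mul_self_of_zset_subset hv.2⟩ ?_ ?_
  · rintro g ⟨hgX, hg⟩
    refine ⟨⟨hXw g hgX, (spez_mul_right_iff hwh).2 hg⟩, ?_⟩
    rw [zset_mul]
    exact Set.subset_union_right
  · rintro v ⟨⟨hvX, hv⟩, hwv⟩
    refine ⟨hXw v hvX, (spez_mul_right_iff hwh).1 ?_⟩
    rwa [mul_mul_self_of_zset_subset hwv]

end

theorem embed_predecessor_sets_general {F : Type*} (X : Set (F → SignType))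
    (hX : IsFanSet X) (J I : Set F) (hJI : J ⊆ I)
    (u₁ u₂ h₁ h₂ : F → SignType)
    (hu₁X : u₁ ∈ X) (hu₂X : u₂ ∈ X)
    (hZu₁ : Zset u₁ = J) (hZu₂ : Zset u₂ = J)
    (hZh₁ : Zset h₁ = I) (hZh₂ : Zset h₂ = I)
    (hs₁ : Spez u₁ h₁) (hs₂ : Spez u₂ h₂)
    (hC₁ : ∀ g ∈ X, Spez g h₁ → J ⊆ Zset g) :
    Set.BijOn (fun g => g * u₁ * u₂)
      {g | g ∈ X ∧ Spez g h₁}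
      {v | (v ∈ X ∧ Spez v h₂) ∧ J ⊆ Zset v} ∧
    (∀ g ∈ {g | g ∈ X ∧ Spez g h₁}, ∀ g' ∈ {g | g ∈ X ∧ Spez g h₁},
      (Spez g g' ↔ Spez (g * u₁ * u₂) (g' * u₁ * u₂))) ∧
    ((∀ g ∈ X, Spez g h₂ → J ⊆ Zset g) →
      Set.BijOn (fun g => g * u₁ * u₂)
        {g | g ∈ X ∧ Spez g h₁} {g | g ∈ X ∧ Spez g h₂}) := by
  have hZw : Zset (u₁ * u₂) = J := by rw [zset_mul, hZu₁, hZu₂, Set.union_self]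
  have hwh₁ : Zset (u₁ * u₂) ⊆ Zset h₁ := hZw ▸ hZh₁ ▸ hJI
  have hh₂ : h₂ = h₁ * (u₁ * u₂) := eq_mul_of_spez_of_zset_eq hs₁ hs₂ (hZh₁.trans hZh₂.symm)
  have hXw : ∀ g ∈ X, g * (u₁ * u₂) ∈ X := fun g hg =>
    mul_assoc g u₁ u₂ ▸ hX g hg u₁ hu₁X u₂ hu₂X
  simp only [mul_assoc]
  subst hZw hh₂
  have hbij := bijOn_mul_spez hXw hwh₁ hC₁
  refine ⟨hbij, fun g _ g' hg' => (spez_mul_right_iff (hC₁ g' hg'.1 hg'.2)).symm,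
    fun hC₂ => ?_⟩
  convert hbij using 1
  exact Set.ext fun v => (and_iff_left_of_imp fun hv => hC₂ v hv.1 hv.2).symm

theorem embed_predecessor_sets {F : Type*} (X : Set (F → SignType))
    (hX : IsFanSet X) (J I : Set F) (hJI : J ⊆ I)
    (u₁ u₂ h₁ h₂ : F → SignType)
    (hu₁X : u₁ ∈ X) (hu₂X : u₂ ∈ X) (hh₁X : h₁ ∈ X) (hh₂X : h₂ ∈ X)
    (hZu₁ : Zset u₁ = J) (hZu₂ : Zset u₂ = J)
    (hZh₁ : Zset h₁ = I) (hZh₂ : Zset h₂ = I)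
    (hs₁ : Spez u₁ h₁) (hs₂ : Spez u₂ h₂)
    (hC₁ : ∀ g ∈ X, Spez g h₁ → J ⊆ Zset g) :
    Set.BijOn (fun g => g * u₁ * u₂)
      {g | g ∈ X ∧ Spez g h₁}
      {v | (v ∈ X ∧ Spez v h₂) ∧ J ⊆ Zset v} ∧
    (∀ g ∈ {g | g ∈ X ∧ Spez g h₁}, ∀ g' ∈ {g | g ∈ X ∧ Spez g h₁},
      (Spez g g' ↔ Spez (g * u₁ * u₂) (g' * u₁ * u₂))) ∧
    ((∀ g ∈ X, Spez g h₂ → J ⊆ Zset g) →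
      Set.BijOn (fun g => g * u₁ * u₂)
        {g | g ∈ X ∧ Spez g h₁} {g | g ∈ X ∧ Spez g h₂}) :=
  embed_predecessor_sets_general X hX J I hJI u₁ u₂ h₁ h₂ hu₁X hu₂X hZu₁ hZu₂ hZh₁ hZh₂ hs₁ hs₂ hC₁
end
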